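/- Let U ⊆ ℝ^n be open, let E be a smooth vector field on U and let L = E∘ be the pointwise multiplication operator for the single-block product on ℝ^n. Then, without any further hypotheses, the Nijenhuis torsion of L and the eventual-identity defect K of E satisfy, for all coordinate vector fields ∂_i, ∂_j (1 ≤ i,j ≤ n): N_L(∂_i, ∂_j) = K(L∂_i, ∂_j) − K(∂_i, L∂_j), where L∂_i denotes the (non-constant) vector field obtained by applying L to ∂_i. -/

import Mathlib

open scoped BigOperators

section Defs

variable {ι : Type*} [Fintype ι] [DecidableEq ι]

/-- Partial derivative of a scalar function in the `i`-th coordinate direction. -/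
noncomputable def pd (i : ι) (f : (ι → ℝ) → ℝ) (u : ι → ℝ) : ℝ :=
  fderiv ℝ f u (Pi.single i 1)

/-- Lie bracket of two vector fields on `ι → ℝ`. -/
noncomputable def lieBr (X Y : (ι → ℝ) → (ι → ℝ)) (u : ι → ℝ) : ι → ℝ :=
  fun i => ∑ s, (X u s * pd s (fun v => Y v i) u - Y u s * pd s (fun v => X v i) u)

/-- Nijenhuis torsion of a pointwise operator `L` (applied pointwise to vector fields):
`N_L(X,Y) = [LX,LY] − L[LX,Y] − L[X,LY] + L²[X,Y]`. -/
noncomputable def nij (L : (ι → ℝ) → (ι → ℝ) → (ι → ℝ))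
    (X Y : (ι → ℝ) → (ι → ℝ)) (u : ι → ℝ) : ι → ℝ :=
  lieBr (fun v => L v (X v)) (fun v => L v (Y v)) u
  - L u (lieBr (fun v => L v (X v)) Y u)
  - L u (lieBr X (fun v => L v (Y v)) u)
  + L u (L u (lieBr X Y u))

end Defs

/-- Single-block (lower-triangular Toeplitz) product on `ℝ^n` (0-based indices:
`(u∘v)_i = Σ_{j+k=i} u_j v_k`). -/
noncomputable def sbProd (n : ℕ) (u v : Fin n → ℝ) : Fin n → ℝ :=
  fun i => ∑ j : Fin n, ∑ k : Fin n,
    if (j : ℕ) + (k : ℕ) = (i : ℕ) then u j * v k else 0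

/-- Unit `e = (1,0,…,0)` of the single-block product. -/
noncomputable def sbUnit (n : ℕ) : Fin n → ℝ :=
  fun i => if (i : ℕ) = 0 then 1 else 0

/-- Eventual-identity defect of a vector field `E`:
`K(X,Y) = [E, X∘Y] − [E,X]∘Y − X∘[E,Y] − [e,E]∘X∘Y`. -/
noncomputable def Kdef (n : ℕ) (E X Y : (Fin n → ℝ) → (Fin n → ℝ))
    (u : Fin n → ℝ) : Fin n → ℝ :=
  lieBr E (fun v => sbProd n (X v) (Y v)) u
  - sbProd n (lieBr E X u) (Y u)
  - sbProd n (X u) (lieBr E Y u)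
  - sbProd n (sbProd n (lieBr (fun _ => sbUnit n) E u) (X u)) (Y u)

section Aux

variable {n : ℕ}

lemma ite_sum {α : Type*} (c : Prop) [Decidable c] (S : Finset α) (g : α → ℝ) :
    (if c then ∑ a ∈ S, g a else 0) = ∑ a ∈ S, if c then g a else 0 := by
  split <;> simp

lemma ite_collapse {P Q R : Prop} [Decidable P] [Decidable Q] [Decidable R]
    (h : R ↔ P ∧ Q) (t : ℝ) :
    (if P then (if Q then t else 0) else 0) = if R then t else 0 := by
  by_cases hP : P <;> by_cases hQ : Q <;> simp [hP, hQ, h]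

lemma sum_ite_cast (f : Fin n → ℝ) (c : ℕ) :
    (∑ a : Fin n, if (a : ℕ) = c then f a else 0) = if h : c < n then f ⟨c, h⟩ else 0 := by
  split
  · next h =>
    rw [show (∑ a : Fin n, if (a : ℕ) = c then f a else 0)
        = ∑ a : Fin n, if a = ⟨c, h⟩ then f a else 0 from
      Finset.sum_congr rfl fun a _ => by simp [Fin.ext_iff]]
    simp
  · next h =>
    apply Finset.sum_eq_zero
    intro a _
    rw [if_neg]
    intro hc
    exact h (hc ▸ a.isLt)

lemma sum_ite_combine (t : ℝ) (c : ℕ) (Q : Prop) [Decidable Q] (hQ : Q → c < n) :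
    (∑ a : Fin n, if ((a : ℕ) = c ∧ Q) then t else 0) = if Q then t else 0 := by
  by_cases hq : Q
  · simp only [hq, and_true, if_true]
    rw [sum_ite_cast (fun _ => t) c, dif_pos (hQ hq)]
  · simp [hq]

lemma sbProd_comm (u v : Fin n → ℝ) : sbProd n u v = sbProd n v u := by
  funext m
  unfold sbProd
  rw [Finset.sum_comm]
  exact Finset.sum_congr rfl fun k _ => Finset.sum_congr rfl fun j _ => by
    rw [Nat.add_comm (k:ℕ) (j:ℕ)]
    congr 1
    ring

lemma sum_rotate (f : Fin n → Fin n → Fin n → ℝ) :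
    (∑ b : Fin n, ∑ j : Fin n, ∑ k : Fin n, f b j k)
      = ∑ j : Fin n, ∑ k : Fin n, ∑ b : Fin n, f b j k :=
  (Finset.sum_comm).trans (Finset.sum_congr rfl fun _ _ => Finset.sum_comm)

lemma collapse2 (m : Fin n) (c : Fin n → Fin n → ℕ) (t : Fin n → Fin n → ℝ)
    (Q : Fin n → Fin n → ℕ → Prop) [∀ x y z, Decidable (Q x y z)]
    (h : ∀ x y, Q x y (m : ℕ) → c x y < n) :
    (∑ a : Fin n, ∑ x : Fin n, ∑ y : Fin n,
      if ((a:ℕ) = c x y ∧ Q x y (m:ℕ)) then t x y else 0)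
    = ∑ x : Fin n, ∑ y : Fin n, if Q x y (m:ℕ) then t x y else 0 := by
  rw [Finset.sum_comm]
  refine Finset.sum_congr rfl fun x _ => ?_
  rw [Finset.sum_comm]
  refine Finset.sum_congr rfl fun y _ => ?_
  exact sum_ite_combine (t x y) (c x y) (Q x y (m:ℕ)) (h x y)

lemma sbProd_assoc (u v w : Fin n → ℝ) :
    sbProd n (sbProd n u v) w = sbProd n u (sbProd n v w) := by
  funext m
  unfold sbProd
  have L : (∑ a : Fin n, ∑ b : Fin n,
      if (a:ℕ)+(b:ℕ) = (m:ℕ) then (∑ j : Fin n, ∑ k : Fin n,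
        if (j:ℕ)+(k:ℕ) = (a:ℕ) then u j * v k else 0) * w b else 0)
      = ∑ j : Fin n, ∑ k : Fin n, ∑ b : Fin n,
        if (j:ℕ)+(k:ℕ)+(b:ℕ) = (m:ℕ) then u j * v k * w b else 0 := by
    have step : ∀ a b : Fin n,
        (if (a:ℕ)+(b:ℕ) = (m:ℕ) then (∑ j : Fin n, ∑ k : Fin n,
          if (j:ℕ)+(k:ℕ) = (a:ℕ) then u j * v k else 0) * w b else 0)
        = ∑ j : Fin n, ∑ k : Fin n,
            if ((a:ℕ) = (j:ℕ)+(k:ℕ) ∧ (j:ℕ)+(k:ℕ)+(b:ℕ) = (m:ℕ)) then u j * v k * w b else 0 := by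
      intro a b
      rw [show ((∑ j : Fin n, ∑ k : Fin n,
          if (j:ℕ)+(k:ℕ) = (a:ℕ) then u j * v k else 0) * w b)
          = ∑ j : Fin n, ∑ k : Fin n,
            if (j:ℕ)+(k:ℕ) = (a:ℕ) then u j * v k * w b else 0 from by
        rw [Finset.sum_mul]
        exact Finset.sum_congr rfl fun j _ => by
          rw [Finset.sum_mul]
          exact Finset.sum_congr rfl fun k _ => by split <;> ring]
      rw [ite_sum]
      refine Finset.sum_congr rfl fun j _ => ?_
      rw [ite_sum]
      refine Finset.sum_congr rfl fun k _ => ?_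
      exact ite_collapse (by omega) _
    simp_rw [step]
    rw [show (∑ a : Fin n, ∑ b : Fin n, ∑ j : Fin n, ∑ k : Fin n,
        if ((a:ℕ) = (j:ℕ)+(k:ℕ) ∧ (j:ℕ)+(k:ℕ)+(b:ℕ) = (m:ℕ)) then u j * v k * w b else 0)
        = ∑ b : Fin n, ∑ j : Fin n, ∑ k : Fin n, ∑ a : Fin n,
        if ((a:ℕ) = (j:ℕ)+(k:ℕ) ∧ (j:ℕ)+(k:ℕ)+(b:ℕ) = (m:ℕ)) then u j * v k * w b else 0 from
      Finset.sum_comm.trans (Finset.sum_congr rfl fun b _ =>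
        Finset.sum_comm.trans (Finset.sum_congr rfl fun j _ => Finset.sum_comm))]
    rw [show (∑ b : Fin n, ∑ j : Fin n, ∑ k : Fin n, ∑ a : Fin n,
        if ((a:ℕ) = (j:ℕ)+(k:ℕ) ∧ (j:ℕ)+(k:ℕ)+(b:ℕ) = (m:ℕ)) then u j * v k * w b else 0)
        = ∑ b : Fin n, ∑ j : Fin n, ∑ k : Fin n,
        if ((j:ℕ)+(k:ℕ)+(b:ℕ) = (m:ℕ)) then u j * v k * w b else 0 from
      Finset.sum_congr rfl fun b _ => Finset.sum_congr rfl fun j _ =>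
        Finset.sum_congr rfl fun k _ =>
          sum_ite_combine (u j * v k * w b) ((j:ℕ)+(k:ℕ)) _
            (fun h => by have := m.isLt; omega)]
    exact sum_rotate _
  rw [L]
  refine Finset.sum_congr rfl fun j _ => ?_
  have step : ∀ a : Fin n,
      (if (j:ℕ)+(a:ℕ) = (m:ℕ) then u j * (∑ k : Fin n, ∑ b : Fin n,
        if (k:ℕ)+(b:ℕ) = (a:ℕ) then v k * w b else 0) else 0)
      = ∑ k : Fin n, ∑ b : Fin n,
          if ((a:ℕ) = (k:ℕ)+(b:ℕ) ∧ (j:ℕ)+((k:ℕ)+(b:ℕ)) = (m:ℕ)) then u j * v k * w b else 0 := by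
    intro a
    rw [show (u j * (∑ k : Fin n, ∑ b : Fin n,
        if (k:ℕ)+(b:ℕ) = (a:ℕ) then v k * w b else 0))
        = ∑ k : Fin n, ∑ b : Fin n,
          if (k:ℕ)+(b:ℕ) = (a:ℕ) then u j * v k * w b else 0 from by
      rw [Finset.mul_sum]
      exact Finset.sum_congr rfl fun k _ => by
        rw [Finset.mul_sum]
        exact Finset.sum_congr rfl fun b _ => by split <;> ring]
    rw [ite_sum]
    refine Finset.sum_congr rfl fun k _ => ?_
    rw [ite_sum]
    refine Finset.sum_congr rfl fun b _ => ?_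
    exact ite_collapse (by omega) _
  simp_rw [step]
  rw [show (∑ a : Fin n, ∑ k : Fin n, ∑ b : Fin n,
      if ((a:ℕ) = (k:ℕ)+(b:ℕ) ∧ (j:ℕ)+((k:ℕ)+(b:ℕ)) = (m:ℕ)) then u j * v k * w b else 0)
      = ∑ k : Fin n, ∑ b : Fin n,
        if ((j:ℕ)+((k:ℕ)+(b:ℕ)) = (m:ℕ)) then u j * v k * w b else 0 from
    Finset.sum_comm.trans (Finset.sum_congr rfl fun k _ =>
      Finset.sum_comm.trans (Finset.sum_congr rfl fun b _ =>
        sum_ite_combine (u j * v k * w b) ((k:ℕ)+(b:ℕ)) _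
          (fun h => by have := m.isLt; omega)))]
  refine Finset.sum_congr rfl fun k _ => Finset.sum_congr rfl fun b _ => ?_
  rw [show (j:ℕ)+(k:ℕ)+(b:ℕ) = (j:ℕ)+((k:ℕ)+(b:ℕ)) from by omega]

lemma sbProd_left_comm (u v w : Fin n → ℝ) :
    sbProd n u (sbProd n v w) = sbProd n v (sbProd n u w) := by
  rw [← sbProd_assoc, sbProd_comm u v, sbProd_assoc]

lemma sbProd_zero_right (u : Fin n → ℝ) : sbProd n u 0 = 0 := by
  funext m; simp [sbProd]

lemma sbProd_zero_left (u : Fin n → ℝ) : sbProd n 0 u = 0 := by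
  rw [sbProd_comm, sbProd_zero_right]

lemma sbProd_neg_right (u v : Fin n → ℝ) : sbProd n u (-v) = -sbProd n u v := by
  funext m
  simp only [sbProd, Pi.neg_apply]
  rw [← Finset.sum_neg_distrib]
  refine Finset.sum_congr rfl fun j _ => ?_
  rw [← Finset.sum_neg_distrib]
  refine Finset.sum_congr rfl fun k _ => ?_
  split <;> ring

lemma sbProd_neg_left (u v : Fin n → ℝ) : sbProd n (-u) v = -sbProd n u v := by
  rw [sbProd_comm, sbProd_neg_right, sbProd_comm]

lemma sbProd_add_right (u v w : Fin n → ℝ) :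
    sbProd n u (v + w) = sbProd n u v + sbProd n u w := by
  funext m
  simp only [sbProd, Pi.add_apply]
  rw [← Finset.sum_add_distrib]
  refine Finset.sum_congr rfl fun j _ => ?_
  rw [← Finset.sum_add_distrib]
  refine Finset.sum_congr rfl fun k _ => ?_
  split <;> ring

lemma sbProd_sub_right (u v w : Fin n → ℝ) :
    sbProd n u (v - w) = sbProd n u v - sbProd n u w := by
  rw [sub_eq_add_neg, sbProd_add_right, sbProd_neg_right, sub_eq_add_neg]

lemma sbProd_sub_left (u v w : Fin n → ℝ) :
    sbProd n (u - v) w = sbProd n u w - sbProd n v w := by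
  rw [sbProd_comm, sbProd_sub_right, sbProd_comm w u, sbProd_comm w v]

lemma sbProd_smul_right (c : ℝ) (u v : Fin n → ℝ) :
    sbProd n u (c • v) = c • sbProd n u v := by
  funext m
  simp only [sbProd, Pi.smul_apply, smul_eq_mul]
  rw [Finset.mul_sum]
  refine Finset.sum_congr rfl fun j _ => ?_
  rw [Finset.mul_sum]
  refine Finset.sum_congr rfl fun k _ => ?_
  split <;> ring

lemma sbProd_smul_left (c : ℝ) (u v : Fin n → ℝ) :
    sbProd n (c • u) v = c • sbProd n u v := by
  rw [sbProd_comm, sbProd_smul_right, sbProd_comm]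

lemma sbProd_sum_right {α : Type*} (S : Finset α) (u : Fin n → ℝ) (f : α → Fin n → ℝ) :
    sbProd n u (∑ a ∈ S, f a) = ∑ a ∈ S, sbProd n u (f a) := by
  classical
  induction S using Finset.induction_on with
  | empty => simp [sbProd_zero_right]
  | insert _ _ h ih => rw [Finset.sum_insert h, Finset.sum_insert h, sbProd_add_right, ih]

lemma sbProd_sum_left {α : Type*} (S : Finset α) (u : Fin n → ℝ) (f : α → Fin n → ℝ) :
    sbProd n (∑ a ∈ S, f a) u = ∑ a ∈ S, sbProd n (f a) u := by
  rw [sbProd_comm, sbProd_sum_right]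
  exact Finset.sum_congr rfl fun a _ => sbProd_comm _ _

end Aux

section Pd

variable {n : ℕ}

lemma pd_const (s : Fin n) (u : Fin n → ℝ) (c : ℝ) : pd s (fun _ => c) u = 0 := by
  simp [pd]

/-- matrix of partial derivatives of `E` at `u`: `dE n E u s m = ∂_s E^m (u)`. -/
noncomputable def dE (n : ℕ) (E : (Fin n → ℝ) → (Fin n → ℝ)) (u : Fin n → ℝ)
    (s : Fin n) : Fin n → ℝ :=
  fun m => pd s (fun v => E v m) u

lemma pd_linear (s : Fin n) (u : Fin n → ℝ) (c : Fin n → ℝ)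
    (f : Fin n → (Fin n → ℝ) → ℝ) (h : ∀ j, DifferentiableAt ℝ (f j) u) :
    pd s (fun v => ∑ j, c j * f j v) u = ∑ j, c j * pd s (f j) u := by
  unfold pd
  rw [fderiv_fun_sum (fun j _ => (h j).const_mul (c j))]
  rw [ContinuousLinearMap.sum_apply]
  refine Finset.sum_congr rfl fun j _ => ?_
  rw [fderiv_const_mul (h j) (c j)]
  simp

lemma sbProd_as_lin (x w : Fin n → ℝ) (m : Fin n) :
    sbProd n x w m
      = ∑ j : Fin n, (∑ k : Fin n, if (j:ℕ)+(k:ℕ) = (m:ℕ) then w k else 0) * x j := by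
  unfold sbProd
  refine Finset.sum_congr rfl fun j _ => ?_
  rw [Finset.sum_mul]
  refine Finset.sum_congr rfl fun k _ => ?_
  split <;> ring

lemma pd_sbProd (s : Fin n) (u : Fin n → ℝ) (E : (Fin n → ℝ) → (Fin n → ℝ))
    (h : ∀ m, DifferentiableAt ℝ (fun v => E v m) u) (w : Fin n → ℝ) (m : Fin n) :
    pd s (fun v => sbProd n (E v) w m) u = sbProd n (dE n E u s) w m := by
  rw [show (fun v => sbProd n (E v) w m)
      = fun v => ∑ j : Fin n, (∑ k : Fin n, if (j:ℕ)+(k:ℕ) = (m:ℕ) then w k else 0) * E v j from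
    funext fun v => sbProd_as_lin (E v) w m]
  rw [pd_linear s u _ _ h, sbProd_as_lin]
  rfl

end Pd


/-- for `L = E∘` (single block), and coordinate vector fields `∂_i, ∂_j`,
`N_L(∂_i, ∂_j) = K(L∂_i, ∂_j) − K(∂_i, L∂_j)` holds on `U` with no further hypotheses. -/
theorem stmt4 (n : ℕ) (U : Set (Fin n → ℝ)) (hU : IsOpen U)
    (E : (Fin n → ℝ) → (Fin n → ℝ)) (hE : ContDiffOn ℝ (⊤ : ℕ∞) E U) :
    ∀ i j : Fin n, ∀ u ∈ U,
      nij (fun v w => sbProd n (E v) w)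
          (fun _ => Pi.single i 1) (fun _ => Pi.single j 1) u
      = Kdef n E (fun v => sbProd n (E v) (Pi.single i 1)) (fun _ => Pi.single j 1) u
        - Kdef n E (fun _ => Pi.single i 1) (fun v => sbProd n (E v) (Pi.single j 1)) u := by
  intro i j u hu
  have hE' : ContDiffAt ℝ (⊤ : ℕ∞) E u := hE.contDiffAt (hU.mem_nhds hu)
  have hd0 : DifferentiableAt ℝ E u := hE'.differentiableAt (by simp)
  have hd : ∀ m, DifferentiableAt ℝ (fun v => E v m) u := fun m =>
    ((ContinuousLinearMap.proj m : ((Fin n → ℝ)) →L[ℝ] ℝ)).differentiableAt.comp u hd0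
  have h1 : lieBr (fun v => sbProd n (E v) (Pi.single i 1))
      (fun v => sbProd n (E v) (Pi.single j 1)) u
      = ∑ s : Fin n, (sbProd n (E u) (Pi.single i 1) s • sbProd n (dE n E u s) (Pi.single j 1)
          - sbProd n (E u) (Pi.single j 1) s • sbProd n (dE n E u s) (Pi.single i 1)) := by
    funext m
    simp only [lieBr, Finset.sum_apply, Pi.sub_apply, Pi.smul_apply, smul_eq_mul]
    refine Finset.sum_congr rfl fun s _ => ?_
    rw [pd_sbProd s u E hd, pd_sbProd s u E hd]
  have h2 : lieBr (fun v => sbProd n (E v) (Pi.single i 1))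
      (fun _ => (Pi.single j 1 : Fin n → ℝ)) u
      = -(sbProd n (dE n E u j) (Pi.single i 1)) := by
    funext m
    simp only [lieBr, Pi.neg_apply]
    rw [Finset.sum_congr rfl (fun s _ => by
      rw [pd_const, pd_sbProd s u E hd]
      simp only [Pi.single_apply]
      ring :
      ∀ s ∈ Finset.univ, (sbProd n (E u) (Pi.single i 1) s * pd s (fun _ => (Pi.single j 1 : Fin n → ℝ) m) u
        - (Pi.single j 1 : Fin n → ℝ) s * pd s (fun v => sbProd n (E v) (Pi.single i 1) m) u)
        = -((if s = j then (1:ℝ) else 0) * sbProd n (dE n E u s) (Pi.single i 1) m))]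
    simp
  have h3 : lieBr (fun _ => (Pi.single i 1 : Fin n → ℝ))
      (fun v => sbProd n (E v) (Pi.single j 1)) u
      = sbProd n (dE n E u i) (Pi.single j 1) := by
    funext m
    simp only [lieBr]
    rw [Finset.sum_congr rfl (fun s _ => by
      rw [pd_const, pd_sbProd s u E hd]
      simp only [Pi.single_apply]
      ring :
      ∀ s ∈ Finset.univ, ((Pi.single i 1 : Fin n → ℝ) s * pd s (fun v => sbProd n (E v) (Pi.single j 1) m) u
        - sbProd n (E u) (Pi.single j 1) s * pd s (fun _ => (Pi.single i 1 : Fin n → ℝ) m) u)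
        = (if s = i then (1:ℝ) else 0) * sbProd n (dE n E u s) (Pi.single j 1) m)]
    simp
  have h4 : lieBr (fun _ => (Pi.single i 1 : Fin n → ℝ))
      (fun _ => (Pi.single j 1 : Fin n → ℝ)) u = 0 := by
    funext m
    simp [lieBr, pd_const]
  have h5 : lieBr E (fun v => sbProd n (E v) (Pi.single i 1)) u
      = ∑ s : Fin n, ((E u s) • sbProd n (dE n E u s) (Pi.single i 1)
          - sbProd n (E u) (Pi.single i 1) s • dE n E u s) := by
    funext m
    simp only [lieBr, Finset.sum_apply, Pi.sub_apply, Pi.smul_apply, smul_eq_mul]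
    refine Finset.sum_congr rfl fun s _ => ?_
    rw [pd_sbProd s u E hd]
    rfl
  have h5' : lieBr E (fun v => sbProd n (E v) (Pi.single j 1)) u
      = ∑ s : Fin n, ((E u s) • sbProd n (dE n E u s) (Pi.single j 1)
          - sbProd n (E u) (Pi.single j 1) s • dE n E u s) := by
    funext m
    simp only [lieBr, Finset.sum_apply, Pi.sub_apply, Pi.smul_apply, smul_eq_mul]
    refine Finset.sum_congr rfl fun s _ => ?_
    rw [pd_sbProd s u E hd]
    rfl
  have h6 : lieBr E (fun _ => (Pi.single j 1 : Fin n → ℝ)) u = -(dE n E u j) := by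
    funext m
    simp only [lieBr, Pi.neg_apply]
    rw [Finset.sum_congr rfl (fun s _ => by
      rw [pd_const]
      simp only [dE, Pi.single_apply]
      ring :
      ∀ s ∈ Finset.univ, (E u s * pd s (fun _ => (Pi.single j 1 : Fin n → ℝ) m) u
        - (Pi.single j 1 : Fin n → ℝ) s * pd s (fun v => E v m) u)
        = -((if s = j then (1:ℝ) else 0) * dE n E u s m))]
    simp
  have h6' : lieBr E (fun _ => (Pi.single i 1 : Fin n → ℝ)) u = -(dE n E u i) := by
    funext m
    simp only [lieBr, Pi.neg_apply]
    rw [Finset.sum_congr rfl (fun s _ => by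
      rw [pd_const]
      simp only [dE, Pi.single_apply]
      ring :
      ∀ s ∈ Finset.univ, (E u s * pd s (fun _ => (Pi.single i 1 : Fin n → ℝ) m) u
        - (Pi.single i 1 : Fin n → ℝ) s * pd s (fun v => E v m) u)
        = -((if s = i then (1:ℝ) else 0) * dE n E u s m))]
    simp
  have hT : (fun v => sbProd n (sbProd n (E v) (Pi.single i 1)) (Pi.single j 1))
      = fun v => sbProd n (Pi.single i 1) (sbProd n (E v) (Pi.single j 1)) := by
    funext v
    rw [sbProd_comm (E v) (Pi.single i 1), sbProd_assoc]
  simp only [nij, Kdef]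
  rw [hT, h1, h2, h3, h4, h5, h5', h6, h6']
  simp only [sbProd_zero_right, sbProd_neg_right, sbProd_neg_left, sbProd_sub_right,
    sbProd_sub_left, sbProd_smul_right, sbProd_smul_left, sbProd_sum_right, sbProd_sum_left,
    Finset.sum_sub_distrib, smul_neg, neg_neg, sub_zero, add_zero]
  simp only [sbProd_comm, sbProd_left_comm, sbProd_assoc]
  abel
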